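/- arXiv:1703.03954 — 3 statements merged into one kernel-verified Lean document; each statement's English description precedes it below -/
import Mathlib

section
/- For real numbers a_0, a_1, b_1 with a_0 > 0 and a_0^2 > a_1^2 + b_1^2 and (a_1, b_1) ≠ (0,0), the integral ∫_0^1 cos(2πy) / (a_0 + a_1 cos(2πy) + b_1 sin(2πy)) dy equals a_1(√(a_0^2 - a_1^2 - b_1^2) - a_0) / ((a_1^2 + b_1^2)√(a_0^2 - a_1^2 - b_1^2)). -/
/-!
Write `D(y) = a₀ + a₁ cos 2πy + b₁ sin 2πy` and `s = √(a₀² - a₁² - b₁²)`, so that `D > 0`.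
Since `D' = 2π (b₁ cos 2πy - a₁ sin 2πy)`, the numerator decomposes as
`(a₁² + b₁²) cos 2πy = a₁ D + (b₁ / 2π) D' - a₀ a₁`. The middle term integrates to
`log D(1) - log D(0) = 0`, and `∫₀¹ 1 / D = 1 / s` by an arctan antiderivative, which gives
`(a₁² + b₁²) ∫₀¹ cos 2πy / D = a₁ - a₀ a₁ / s`.
-/

open Real

noncomputable section

def trigPoly1 (a₀ a₁ b₁ y : ℝ) : ℝ := a₀ + a₁ * cos (2 * π * y) + b₁ * sin (2 * π * y)

section

variable {a₀ a₁ b₁ : ℝ}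

theorem hasDerivAt_cos_two_pi_mul (y : ℝ) :
    HasDerivAt (fun y => cos (2 * π * y)) (-(2 * π * sin (2 * π * y))) y := by
  simpa [mul_comm] using ((hasDerivAt_id y).const_mul (2 * π)).cos

theorem hasDerivAt_sin_two_pi_mul (y : ℝ) :
    HasDerivAt (fun y => sin (2 * π * y)) (2 * π * cos (2 * π * y)) y := by
  simpa [mul_comm] using ((hasDerivAt_id y).const_mul (2 * π)).sin

theorem hasDerivAt_trigPoly1 (y : ℝ) :
    HasDerivAt (trigPoly1 a₀ a₁ b₁)
      (2 * π * (b₁ * cos (2 * π * y) - a₁ * sin (2 * π * y))) y := by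
  refine ((((hasDerivAt_cos_two_pi_mul y).const_mul a₁).const_add a₀).add
    ((hasDerivAt_sin_two_pi_mul y).const_mul b₁)).congr_deriv ?_
  ring

theorem continuous_trigPoly1 : Continuous (trigPoly1 a₀ a₁ b₁) :=
  continuous_iff_continuousAt.2 fun y => (hasDerivAt_trigPoly1 y).continuousAt

theorem trigPoly1_one : trigPoly1 a₀ a₁ b₁ 1 = trigPoly1 a₀ a₁ b₁ 0 := by
  simp [trigPoly1]

theorem sq_mul_cos_add_mul_sin_le (a b θ : ℝ) : (a * cos θ + b * sin θ) ^ 2 ≤ a ^ 2 + b ^ 2 := by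
  nlinarith [sin_sq_add_cos_sq θ, sq_nonneg (a * sin θ - b * cos θ)]

theorem trigPoly1_pos (h₀ : 0 < a₀) (h : a₁ ^ 2 + b₁ ^ 2 < a₀ ^ 2) (y : ℝ) :
    0 < trigPoly1 a₀ a₁ b₁ y := by
  have := sq_mul_cos_add_mul_sin_le a₁ b₁ (2 * π * y)
  unfold trigPoly1
  nlinarith

theorem integral_deriv_div_trigPoly1 (hD : ∀ y, trigPoly1 a₀ a₁ b₁ y ≠ 0) :
    ∫ y in (0 : ℝ)..1, 2 * π * (b₁ * cos (2 * π * y) - a₁ * sin (2 * π * y)) /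
      trigPoly1 a₀ a₁ b₁ y = 0 := by
  rw [intervalIntegral.integral_eq_sub_of_hasDerivAt
    (fun y _ => (hasDerivAt_trigPoly1 y).log (hD y)), trigPoly1_one, sub_self]
  exact (Continuous.div (by fun_prop) continuous_trigPoly1 hD).intervalIntegrable _ _

/-- A primitive of `1 / D` that is continuous on all of `ℝ`, unlike the one given by the tangent
half-angle substitution; its arctan part is `1`-periodic. -/
theorem hasDerivAt_primitive_inv_trigPoly1 {s : ℝ} (hs : 0 < s)
    (hs2 : s ^ 2 = a₀ ^ 2 - a₁ ^ 2 - b₁ ^ 2) {y : ℝ} (hD : 0 < trigPoly1 a₀ a₁ b₁ y) :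
    HasDerivAt (fun y => y / s - (π * s)⁻¹ *
        arctan ((a₁ * sin (2 * π * y) - b₁ * cos (2 * π * y)) / (trigPoly1 a₀ a₁ b₁ y + s)))
      (trigPoly1 a₀ a₁ b₁ y)⁻¹ y := by
  have hN := ((hasDerivAt_sin_two_pi_mul y).const_mul a₁).sub
    ((hasDerivAt_cos_two_pi_mul y).const_mul b₁)
  have hM := (hasDerivAt_trigPoly1 (a₀ := a₀) (a₁ := a₁) (b₁ := b₁) y).add_const s
  have hMpos : 0 < trigPoly1 a₀ a₁ b₁ y + s := by linarith
  refine (((hasDerivAt_id y).div_const s).sub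
    (((hN.div hM hMpos.ne').arctan).const_mul (π * s)⁻¹)).congr_deriv ?_
  simp only [Pi.sub_apply, Pi.div_apply, trigPoly1] at hD hMpos ⊢
  set c := cos (2 * π * y)
  set si := sin (2 * π * y)
  have hpy : si ^ 2 + c ^ 2 = 1 := sin_sq_add_cos_sq _
  have hnorm : (a₀ + a₁ * c + b₁ * si + s) ^ 2 + (a₁ * si - b₁ * c) ^ 2
      = 2 * (a₀ + s) * (a₀ + a₁ * c + b₁ * si) := by
    linear_combination (a₁ ^ 2 + b₁ ^ 2) * hpy + hs2
  have has : 0 < a₀ + s := by nlinarith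
  have harctan : 1 + ((a₁ * si - b₁ * c) / (a₀ + a₁ * c + b₁ * si + s)) ^ 2
      = 2 * (a₀ + s) * (a₀ + a₁ * c + b₁ * si) / (a₀ + a₁ * c + b₁ * si + s) ^ 2 := by
    rw [← hnorm, add_div, div_self (pow_pos hMpos 2).ne', div_pow]
  rw [harctan]
  have hπ := pi_pos
  field_simp
  linear_combination -hs2 - (a₁ ^ 2 + b₁ ^ 2) * hpy

theorem integral_inv_trigPoly1 (h₀ : 0 < a₀) (h : a₁ ^ 2 + b₁ ^ 2 < a₀ ^ 2) :
    ∫ y in (0 : ℝ)..1, (trigPoly1 a₀ a₁ b₁ y)⁻¹ = (√(a₀ ^ 2 - a₁ ^ 2 - b₁ ^ 2))⁻¹ := by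
  set s := √(a₀ ^ 2 - a₁ ^ 2 - b₁ ^ 2)
  have hs : 0 < s := sqrt_pos.2 (by linarith)
  have hs2 : s ^ 2 = a₀ ^ 2 - a₁ ^ 2 - b₁ ^ 2 := sq_sqrt (by linarith)
  rw [intervalIntegral.integral_eq_sub_of_hasDerivAt
    (fun y _ => hasDerivAt_primitive_inv_trigPoly1 hs hs2 (trigPoly1_pos h₀ h y))]
  · simp only [trigPoly1_one, mul_one, mul_zero, cos_two_pi, sin_two_pi, cos_zero, sin_zero]
    ring
  · exact (continuous_trigPoly1.inv₀ fun y => (trigPoly1_pos h₀ h y).ne').intervalIntegrable _ _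

theorem mul_cos_div_trigPoly1_eq {y : ℝ} (hD : trigPoly1 a₀ a₁ b₁ y ≠ 0) :
    (a₁ ^ 2 + b₁ ^ 2) * (cos (2 * π * y) / trigPoly1 a₀ a₁ b₁ y) =
      a₁ + b₁ / (2 * π) * (2 * π * (b₁ * cos (2 * π * y) - a₁ * sin (2 * π * y)) /
        trigPoly1 a₀ a₁ b₁ y) - a₀ * a₁ * (trigPoly1 a₀ a₁ b₁ y)⁻¹ := by
  have hπ := pi_pos.ne'
  field_simp
  unfold trigPoly1
  ring

theorem mul_integral_cos_div_trigPoly1 (hD : ∀ y, trigPoly1 a₀ a₁ b₁ y ≠ 0) :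
    (a₁ ^ 2 + b₁ ^ 2) * ∫ y in (0 : ℝ)..1, cos (2 * π * y) / trigPoly1 a₀ a₁ b₁ y =
      a₁ - a₀ * a₁ * ∫ y in (0 : ℝ)..1, (trigPoly1 a₀ a₁ b₁ y)⁻¹ := by
  have hlog : IntervalIntegrable (fun y => 2 * π * (b₁ * cos (2 * π * y) - a₁ * sin (2 * π * y)) /
      trigPoly1 a₀ a₁ b₁ y) MeasureTheory.volume 0 1 :=
    (Continuous.div (by fun_prop) continuous_trigPoly1 hD).intervalIntegrable _ _
  have hinv : IntervalIntegrable (fun y => (trigPoly1 a₀ a₁ b₁ y)⁻¹) MeasureTheory.volume 0 1 :=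
    (continuous_trigPoly1.inv₀ hD).intervalIntegrable _ _
  rw [← intervalIntegral.integral_const_mul,
    intervalIntegral.integral_congr fun y _ => mul_cos_div_trigPoly1_eq (hD y),
    intervalIntegral.integral_sub ((intervalIntegrable_const).add (hlog.const_mul _))
      (hinv.const_mul _),
    intervalIntegral.integral_add intervalIntegrable_const (hlog.const_mul _),
    intervalIntegral.integral_const_mul, intervalIntegral.integral_const_mul,
    integral_deriv_div_trigPoly1 hD]
  simp

end

theorem stmt_1 (a₀ a₁ b₁ : ℝ) (h₀ : 0 < a₀) (h : a₁ ^ 2 + b₁ ^ 2 < a₀ ^ 2)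
    (hne : (a₁, b₁) ≠ (0, 0)) :
    ∫ y in (0:ℝ)..1,
        Real.cos (2 * π * y) / (a₀ + a₁ * Real.cos (2 * π * y) + b₁ * Real.sin (2 * π * y)) =
      a₁ * (Real.sqrt (a₀ ^ 2 - a₁ ^ 2 - b₁ ^ 2) - a₀) /
        ((a₁ ^ 2 + b₁ ^ 2) * Real.sqrt (a₀ ^ 2 - a₁ ^ 2 - b₁ ^ 2)) := by
  have hr : a₁ ^ 2 + b₁ ^ 2 ≠ 0 := by
    contrapose! hne
    simpa using (add_eq_zero_iff_of_nonneg (sq_nonneg a₁) (sq_nonneg b₁)).1 hne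
  have hs : √(a₀ ^ 2 - a₁ ^ 2 - b₁ ^ 2) ≠ 0 := (sqrt_pos.2 (by linarith)).ne'
  have key := mul_integral_cos_div_trigPoly1 fun y => (trigPoly1_pos h₀ h y).ne'
  rw [integral_inv_trigPoly1 h₀ h] at key
  change ∫ y in (0 : ℝ)..1, cos (2 * π * y) / trigPoly1 a₀ a₁ b₁ y = _
  rw [eq_div_iff (mul_ne_zero hr hs), ← mul_assoc, mul_comm _ (a₁ ^ 2 + b₁ ^ 2), key]
  field_simp
end
end

section
/- Let V : T → R be continuous, 0 < α ≤ 2, and c_j > 0. Define Φ_α on the set C of coefficient vectors (a_0,...,a_n,b_1,...,b_n) with f(x) := a_0 + ∑_{k=1}^n (a_k cos(2πkx) + b_k sin(2πkx)) − V(x) > 0 for all x, by Φ_α(a,b) = ∫_T φ_α(f(y)) dy, where φ_α(x) = (c_j α/(α−1)) x^{(α−1)/α} for α ≠ 1 and φ_α(x) = c_j ln x for α = 1. Then for any (a,b) ∈ C and any nonzero (ξ_0,...,ξ_n,η_1,...,η_n) ∈ R^{2n+1}, the quadratic form of the Hessian of Φ_α at (a,b) applied to (ξ,η) equals −(c_j/α)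 ∫_T (ξ_0 + ∑_{k=1}^n ξ_k cos(2πky) + η_k sin(2πky))^2 / f(y)^{1+1/α} dy < 0; in particular Φ_α is strictly concave on C. -/
/-!
Along a line `t ↦ ab + t • v` the profile is affine, `f (ab + t • v) = f ab + t • g` where `g` is
the trigonometric polynomial with coefficients `v`, so differentiating twice under the integral
gives `∫ φ''(f ab) g²` with `φ''(x) = -(c/α) x^(-1-1/α) < 0`. By orthogonality of the functions
`cos (2πky)`, `sin (2πky)` on `[0,1]`, `g` vanishes identically there only when `v = 0`, so this
integral is negative. Strict concavity of `Φ` on `C` follows directly from the strict concavity of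
`φ` on `(0,∞)` and the affinity of `ab ↦ f ab`.
-/

open Real Set Filter Topology

theorem integral_cos_two_pi_int_mul (m : ℤ) :
    ∫ y in (0:ℝ)..1, cos (2 * π * m * y) = if m = 0 then 1 else 0 := by
  split_ifs with hm
  · simp [hm]
  · have hc : 2 * π * (m : ℝ) ≠ 0 := by positivity
    have : sin (2 * π * m) = 0 := by
      rw [show 2 * π * (m : ℝ) = (2 * m : ℤ) * π by push_cast; ring, sin_int_mul_pi]
    simp [intervalIntegral.integral_comp_mul_left (fun y => cos y) hc, this]

theorem integral_sin_two_pi_int_mul (m : ℤ) :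
    ∫ y in (0:ℝ)..1, sin (2 * π * m * y) = 0 := by
  rcases eq_or_ne m 0 with hm | hm
  · simp [hm]
  · have hc : 2 * π * (m : ℝ) ≠ 0 := by positivity
    have : cos (2 * π * m) = 1 := by
      rw [show 2 * π * (m : ℝ) = m * (2 * π) by ring, cos_int_mul_two_pi]
    simp [intervalIntegral.integral_comp_mul_left (fun y => sin y) hc, this]

theorem integral_cos_mul_cos_two_pi_int_mul (k m : ℤ) :
    ∫ y in (0:ℝ)..1, cos (2 * π * k * y) * cos (2 * π * m * y) =
      ((if k = m then 1 else 0) + (if k = -m then 1 else 0)) / 2 := by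
  have h : ∀ y : ℝ, cos (2 * π * k * y) * cos (2 * π * m * y) =
      (cos (2 * π * ↑(k - m) * y) + cos (2 * π * ↑(k + m) * y)) / 2 := fun y => by
    push_cast
    rw [show 2 * π * (k - m) * y = 2 * π * k * y - 2 * π * m * y by ring,
      show 2 * π * (k + m) * y = 2 * π * k * y + 2 * π * m * y by ring, cos_sub, cos_add]
    ring
  simp_rw [h]
  rw [intervalIntegral.integral_div, intervalIntegral.integral_add
    ((by fun_prop : Continuous _).intervalIntegrable _ _)
    ((by fun_prop : Continuous _).intervalIntegrable _ _),
    integral_cos_two_pi_int_mul, integral_cos_two_pi_int_mul]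
  simp only [sub_eq_zero, add_eq_zero_iff_eq_neg]

theorem integral_sin_mul_sin_two_pi_int_mul (k m : ℤ) :
    ∫ y in (0:ℝ)..1, sin (2 * π * k * y) * sin (2 * π * m * y) =
      ((if k = m then 1 else 0) - (if k = -m then 1 else 0)) / 2 := by
  have h : ∀ y : ℝ, sin (2 * π * k * y) * sin (2 * π * m * y) =
      (cos (2 * π * ↑(k - m) * y) - cos (2 * π * ↑(k + m) * y)) / 2 := fun y => by
    push_cast
    rw [show 2 * π * (k - m) * y = 2 * π * k * y - 2 * π * m * y by ring,
      show 2 * π * (k + m) * y = 2 * π * k * y + 2 * π * m * y by ring, cos_sub, cos_add]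
    ring
  simp_rw [h]
  rw [intervalIntegral.integral_div, intervalIntegral.integral_sub
    ((by fun_prop : Continuous _).intervalIntegrable _ _)
    ((by fun_prop : Continuous _).intervalIntegrable _ _),
    integral_cos_two_pi_int_mul, integral_cos_two_pi_int_mul]
  simp only [sub_eq_zero, add_eq_zero_iff_eq_neg]

theorem integral_sin_mul_cos_two_pi_int_mul (k m : ℤ) :
    ∫ y in (0:ℝ)..1, sin (2 * π * k * y) * cos (2 * π * m * y) = 0 := by
  have h : ∀ y : ℝ, sin (2 * π * k * y) * cos (2 * π * m * y) =
      (sin (2 * π * ↑(k - m) * y) + sin (2 * π * ↑(k + m) * y)) / 2 := fun y => by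
    push_cast
    rw [show 2 * π * (k - m) * y = 2 * π * k * y - 2 * π * m * y by ring,
      show 2 * π * (k + m) * y = 2 * π * k * y + 2 * π * m * y by ring, sin_sub, sin_add]
    ring
  simp_rw [h]
  rw [intervalIntegral.integral_div, intervalIntegral.integral_add
    ((by fun_prop : Continuous _).intervalIntegrable _ _)
    ((by fun_prop : Continuous _).intervalIntegrable _ _),
    integral_sin_two_pi_int_mul, integral_sin_two_pi_int_mul]
  norm_num

noncomputable def trigPoly (n : ℕ) : ((Fin (n + 1) → ℝ) × (Fin n → ℝ)) →ₗ[ℝ] ℝ → ℝ where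
  toFun v y := (∑ k : Fin (n + 1), v.1 k * cos (2 * π * k.1 * y)) +
    (∑ k : Fin n, v.2 k * sin (2 * π * (k.1 + 1) * y))
  map_add' v w := by
    ext y
    simp only [Prod.fst_add, Prod.snd_add, Pi.add_apply, add_mul, Finset.sum_add_distrib]
    ring
  map_smul' c v := by
    ext y
    simp only [Prod.smul_fst, Prod.smul_snd, Pi.smul_apply, smul_eq_mul, RingHom.id_apply,
      mul_assoc, ← Finset.mul_sum]
    ring

theorem trigPoly_apply {n : ℕ} (v : (Fin (n + 1) → ℝ) × (Fin n → ℝ)) (y : ℝ) :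
    trigPoly n v y = (∑ k : Fin (n + 1), v.1 k * cos (2 * π * k.1 * y)) +
      (∑ k : Fin n, v.2 k * sin (2 * π * (k.1 + 1) * y)) := rfl

theorem continuous_trigPoly {n : ℕ} (v : (Fin (n + 1) → ℝ) × (Fin n → ℝ)) :
    Continuous (trigPoly n v) := by
  unfold trigPoly
  dsimp only [LinearMap.coe_mk, AddHom.coe_mk]
  fun_prop

theorem periodic_trigPoly {n : ℕ} (v : (Fin (n + 1) → ℝ) × (Fin n → ℝ)) :
    Function.Periodic (trigPoly n v) 1 := fun x => by
  simp only [trigPoly_apply]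
  congr 1 <;> refine Finset.sum_congr rfl fun k _ => ?_
  · rw [show 2 * π * k.1 * (x + 1) = 2 * π * k.1 * x + k.1 * (2 * π) by ring,
      cos_add_nat_mul_two_pi]
  · rw [show 2 * π * (k.1 + 1) * (x + 1) = 2 * π * (k.1 + 1) * x + ↑(k.1 + 1) * (2 * π) by
      push_cast; ring, sin_add_nat_mul_two_pi]

theorem integral_trigPoly_mul {n : ℕ} (v : (Fin (n + 1) → ℝ) × (Fin n → ℝ)) {w : ℝ → ℝ}
    (hw : Continuous w) :
    ∫ y in (0:ℝ)..1, trigPoly n v y * w y =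
      (∑ k : Fin (n + 1), v.1 k * ∫ y in (0:ℝ)..1, cos (2 * π * k.1 * y) * w y) +
      ∑ k : Fin n, v.2 k * ∫ y in (0:ℝ)..1, sin (2 * π * (k.1 + 1) * y) * w y := by
  simp only [trigPoly_apply, add_mul, Finset.sum_mul, ← intervalIntegral.integral_const_mul]
  rw [intervalIntegral.integral_add, intervalIntegral.integral_finsetSum,
    intervalIntegral.integral_finsetSum]
  · simp only [mul_assoc]
  all_goals first
    | exact fun k _ => (by fun_prop : Continuous _).intervalIntegrable _ _
    | exact (by fun_prop : Continuous _).intervalIntegrable _ _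

theorem integral_trigPoly_mul_cos {n : ℕ} (v : (Fin (n + 1) → ℝ) × (Fin n → ℝ)) (m : Fin (n + 1)) :
    ∫ y in (0:ℝ)..1, trigPoly n v y * cos (2 * π * m.1 * y) =
      if m = 0 then v.1 m else v.1 m / 2 := by
  have hcc : ∀ k : Fin (n + 1), ∫ y in (0:ℝ)..1, cos (2 * π * k.1 * y) * cos (2 * π * m.1 * y) =
      if k = m then (if m = 0 then 1 else 1 / 2) else 0 := fun k => by
    have := integral_cos_mul_cos_two_pi_int_mul k m
    push_cast at this
    rw [this]
    rcases eq_or_ne k m with rfl | hkm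
    · rcases eq_or_ne k 0 with rfl | hk <;> simp [*]
    · have h1 : (k.1 : ℤ) ≠ m.1 := by simpa [Fin.val_inj] using hkm
      have h2 : (k.1 : ℤ) ≠ -m.1 := by omega
      simp [hkm, h1, h2]
  have hsc : ∀ k : Fin n,
      ∫ y in (0:ℝ)..1, sin (2 * π * (k.1 + 1) * y) * cos (2 * π * m.1 * y) = 0 :=
    fun k => by exact_mod_cast integral_sin_mul_cos_two_pi_int_mul (k.1 + 1) m
  rw [integral_trigPoly_mul v (by fun_prop)]
  simp only [hcc, hsc]
  split_ifs <;> simp [*, div_eq_mul_inv]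

theorem integral_trigPoly_mul_sin {n : ℕ} (v : (Fin (n + 1) → ℝ) × (Fin n → ℝ)) (m : Fin n) :
    ∫ y in (0:ℝ)..1, trigPoly n v y * sin (2 * π * (m.1 + 1) * y) = v.2 m / 2 := by
  have hcs : ∀ k : Fin (n + 1),
      ∫ y in (0:ℝ)..1, cos (2 * π * k.1 * y) * sin (2 * π * (m.1 + 1) * y) = 0 := fun k => by
    simp_rw [mul_comm (cos _)]
    exact_mod_cast integral_sin_mul_cos_two_pi_int_mul (m.1 + 1) k
  have hss : ∀ k : Fin n, ∫ y in (0:ℝ)..1,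
      sin (2 * π * (k.1 + 1) * y) * sin (2 * π * (m.1 + 1) * y) = if k = m then 1 / 2 else 0 :=
    fun k => by
    have := integral_sin_mul_sin_two_pi_int_mul (k.1 + 1) (m.1 + 1)
    push_cast at this
    have h2 : (k.1 : ℤ) + 1 ≠ -(m.1 + 1) := by omega
    rw [this, if_neg h2]
    rcases eq_or_ne k m with rfl | hkm
    · simp
    · have h1 : (k.1 : ℤ) + 1 ≠ m.1 + 1 := by simpa [Fin.val_inj] using hkm
      simp [hkm, h1]
  rw [integral_trigPoly_mul v (by fun_prop)]
  simp [hcs, hss, div_eq_mul_inv]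

theorem exists_trigPoly_ne_zero {n : ℕ} {v : (Fin (n + 1) → ℝ) × (Fin n → ℝ)} (hv : v ≠ 0) :
    ∃ y ∈ Icc (0:ℝ) 1, trigPoly n v y ≠ 0 := by
  contrapose! hv
  have hint : ∀ w : ℝ → ℝ, ∫ y in (0:ℝ)..1, trigPoly n v y * w y = 0 := fun w => by
    rw [intervalIntegral.integral_congr (g := 0) fun y hy => by
      simp [hv y (by rwa [uIcc_of_le zero_le_one] at hy)]]
    simp
  ext m <;> simp only [Prod.fst_zero, Prod.snd_zero, Pi.zero_apply]
  · have := integral_trigPoly_mul_cos v m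
    rw [hint] at this
    split_ifs at this <;> linarith
  · linarith [hint _ ▸ integral_trigPoly_mul_sin v m]

theorem eventually_forall_add_mul_mem {s K : Set ℝ} (hs : IsOpen s) (hK : IsCompact K)
    {u g : ℝ → ℝ} (hu : Continuous u) (hg : Continuous g) {t₀ : ℝ}
    (ht₀ : ∀ y ∈ K, u y + t₀ * g y ∈ s) :
    ∀ᶠ t in 𝓝 t₀, ∀ y ∈ K, u y + t * g y ∈ s :=
  hK.eventually_forall_of_forall_eventually fun y hy =>
    (by fun_prop : Continuous fun z : ℝ × ℝ => u z.2 + z.1 * g z.2).continuousAt.preimage_mem_nhds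
      (hs.mem_nhds (ht₀ y hy))

theorem hasDerivAt_integral_comp_add_mul {s : Set ℝ} (hs : IsOpen s) {ψ ψ' : ℝ → ℝ}
    (hψ : ∀ z ∈ s, HasDerivAt ψ (ψ' z) z) (hψ' : ContinuousOn ψ' s)
    {u g h : ℝ → ℝ} (hu : Continuous u) (hg : Continuous g) (hh : Continuous h) {t₀ : ℝ}
    (ht₀ : ∀ y ∈ Icc (0:ℝ) 1, u y + t₀ * g y ∈ s) :
    HasDerivAt (fun t => ∫ y in (0:ℝ)..1, ψ (u y + t * g y) * h y)
      (∫ y in (0:ℝ)..1, ψ' (u y + t₀ * g y) * (g y * h y)) t₀ := by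
  obtain ⟨r, hr, hball⟩ := Metric.nhds_basis_closedBall.eventually_iff.1
    (eventually_forall_add_mul_mem hs isCompact_Icc hu hg ht₀)
  have hψc : ContinuousOn ψ s := fun z hz => (hψ z hz).continuousAt.continuousWithinAt
  have hcont : ∀ {χ : ℝ → ℝ} {k : ℝ → ℝ}, ContinuousOn χ s → Continuous k →
      ContinuousOn (fun p : ℝ × ℝ => χ (u p.2 + p.1 * g p.2) * k p.2)
        (Metric.closedBall t₀ r ×ˢ Icc 0 1) := fun hχ hk =>
    (hχ.comp (by fun_prop) fun p hp => hball hp.1 p.2 hp.2).mul (by fun_prop)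
  have hslice : ∀ {χ : ℝ → ℝ} {k : ℝ → ℝ}, ContinuousOn χ s → Continuous k →
      ∀ t ∈ Metric.closedBall t₀ r,
        IntervalIntegrable (fun y => χ (u y + t * g y) * k y) MeasureTheory.volume 0 1 :=
    fun hχ hk t ht => ContinuousOn.intervalIntegrable_of_Icc zero_le_one
      ((hcont hχ hk).comp (continuous_const.prodMk continuous_id).continuousOn
        fun y hy => ⟨ht, hy⟩)
  obtain ⟨M, hM⟩ := (isCompact_closedBall (x := t₀) (r := r)).prod isCompact_Icc
    |>.exists_bound_of_continuousOn (hcont hψ' (hg.mul hh))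
  have ht₀r : t₀ ∈ Metric.closedBall t₀ r := Metric.mem_closedBall_self hr.le
  refine (intervalIntegral.hasDerivAt_integral_of_dominated_loc_of_deriv_le
    (F := fun t y => ψ (u y + t * g y) * h y) (F' := fun t y => ψ' (u y + t * g y) * (g y * h y))
    (Metric.ball_mem_nhds t₀ hr) ?_ (hslice hψc hh t₀ ht₀r)
    (hslice hψ' (hg.mul hh) t₀ ht₀r).def'.aestronglyMeasurable (bound := fun _ => M)
    ?_ intervalIntegrable_const ?_).2
  · filter_upwards [Metric.closedBall_mem_nhds t₀ hr] with t ht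
    exact (hslice hψc hh t ht).def'.aestronglyMeasurable
  · refine Eventually.of_forall fun y hy t ht => ?_
    rw [uIoc_of_le zero_le_one] at hy
    exact hM (t, y) ⟨Metric.ball_subset_closedBall ht, Ioc_subset_Icc_self hy⟩
  · refine Eventually.of_forall fun y hy t ht => ?_
    rw [uIoc_of_le zero_le_one] at hy
    exact ((hψ _ (hball (Metric.ball_subset_closedBall ht) y (Ioc_subset_Icc_self hy))).comp t
      ((hasDerivAt_mul_const (g y)).const_add (u y))).mul_const (h y) |>.congr_deriv (mul_assoc ..)

theorem deriv_deriv_integral_comp_add_mul {s : Set ℝ} (hs : IsOpen s) {ψ ψ' ψ'' : ℝ → ℝ}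
    (hψ : ∀ z ∈ s, HasDerivAt ψ (ψ' z) z) (hψ' : ∀ z ∈ s, HasDerivAt ψ' (ψ'' z) z)
    (hψ'' : ContinuousOn ψ'' s) {u g : ℝ → ℝ} (hu : Continuous u) (hg : Continuous g) {t₀ : ℝ}
    (ht₀ : ∀ y ∈ Icc (0:ℝ) 1, u y + t₀ * g y ∈ s) :
    deriv (deriv fun t => ∫ y in (0:ℝ)..1, ψ (u y + t * g y)) t₀ =
      ∫ y in (0:ℝ)..1, ψ'' (u y + t₀ * g y) * g y ^ 2 := by
  have hψ'c : ContinuousOn ψ' s := fun z hz => (hψ' z hz).continuousAt.continuousWithinAt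
  have hderiv : deriv (fun t => ∫ y in (0:ℝ)..1, ψ (u y + t * g y)) =ᶠ[𝓝 t₀]
      fun t => ∫ y in (0:ℝ)..1, ψ' (u y + t * g y) * g y := by
    filter_upwards [eventually_forall_add_mul_mem hs isCompact_Icc hu hg ht₀] with t ht
    simpa using (hasDerivAt_integral_comp_add_mul hs hψ hψ'c hu hg continuous_const
      (h := fun _ => 1) ht).deriv
  rw [hderiv.deriv_eq, (hasDerivAt_integral_comp_add_mul hs hψ' hψ'' hu hg hg ht₀).deriv]
  simp only [sq]

theorem StrictConcaveOn.smul_integral_add_smul_integral_lt {s : Set ℝ} {ψ : ℝ → ℝ}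
    (hψ : StrictConcaveOn ℝ s ψ) (hψc : ContinuousOn ψ s) {u w : ℝ → ℝ} (hu : Continuous u)
    (hw : Continuous w) (hus : ∀ y ∈ Icc (0:ℝ) 1, u y ∈ s) (hws : ∀ y ∈ Icc (0:ℝ) 1, w y ∈ s)
    (hne : ∃ y ∈ Icc (0:ℝ) 1, u y ≠ w y) {a b : ℝ} (ha : 0 < a) (hb : 0 < b) (hab : a + b = 1) :
    (a * ∫ y in (0:ℝ)..1, ψ (u y)) + b * ∫ y in (0:ℝ)..1, ψ (w y) <
      ∫ y in (0:ℝ)..1, ψ (a * u y + b * w y) := by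
  have hcont : ∀ {k : ℝ → ℝ}, Continuous k → (∀ y ∈ Icc (0:ℝ) 1, k y ∈ s) →
      ContinuousOn (fun y => ψ (k y)) (Icc 0 1) := fun hk hks => hψc.comp hk.continuousOn hks
  have hcomb : ∀ y ∈ Icc (0:ℝ) 1, a * u y + b * w y ∈ s := fun y hy =>
    hψ.1 (hus y hy) (hws y hy) ha.le hb.le hab
  have hcu : ContinuousOn (fun y => a * ψ (u y)) (Icc 0 1) := continuousOn_const.mul (hcont hu hus)
  have hcw : ContinuousOn (fun y => b * ψ (w y)) (Icc 0 1) := continuousOn_const.mul (hcont hw hws)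
  rw [← intervalIntegral.integral_const_mul, ← intervalIntegral.integral_const_mul,
    ← intervalIntegral.integral_add (hcu.intervalIntegrable_of_Icc zero_le_one)
      (hcw.intervalIntegrable_of_Icc zero_le_one)]
  refine intervalIntegral.integral_lt_integral_of_continuousOn_of_le_of_exists_lt zero_lt_one
    (hcu.add hcw)
    (hcont (by fun_prop) hcomb) (fun y hy => ?_) ?_
  · exact hψ.concaveOn.2 (hus y (Ioc_subset_Icc_self hy)) (hws y (Ioc_subset_Icc_self hy))
      ha.le hb.le hab
  · obtain ⟨y, hy, hne⟩ := hne
    exact ⟨y, hy, hψ.2 (hus y hy) (hws y hy) hne ha hb hab⟩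

theorem integral_sq_div_rpow_pos {u g : ℝ → ℝ} (hu : Continuous u) (hg : Continuous g)
    (hupos : ∀ y ∈ Icc (0:ℝ) 1, 0 < u y) (hg0 : ∃ y ∈ Icc (0:ℝ) 1, g y ≠ 0) (p : ℝ) :
    0 < ∫ y in (0:ℝ)..1, g y ^ 2 / u y ^ p := by
  refine intervalIntegral.integral_pos zero_lt_one
    ((hg.pow 2).continuousOn.div (hu.continuousOn.rpow_const fun y hy => Or.inl (hupos y hy).ne')
      fun y hy => (rpow_pos_of_pos (hupos y hy) p).ne')
    (fun y hy => div_nonneg (sq_nonneg _) (rpow_nonneg (hupos y (Ioc_subset_Icc_self hy)).le p)) ?_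
  obtain ⟨y, hy, hgy⟩ := hg0
  exact ⟨y, hy, div_pos (pow_two_pos_of_ne_zero hgy) (rpow_pos_of_pos (hupos y hy) p)⟩

theorem hasDerivAt_phi {α c : ℝ} (hα : α ≠ 0) {φ : ℝ → ℝ}
    (hφ : ∀ x : ℝ, 0 < x →
      φ x = if α = 1 then c * log x else c * α / (α - 1) * x ^ ((α - 1) / α))
    {x : ℝ} (hx : 0 < x) : HasDerivAt φ (c * x ^ (-1 / α)) x := by
  have hφx : (fun z => if α = 1 then c * log z else c * α / (α - 1) * z ^ ((α - 1) / α))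
      =ᶠ[𝓝 x] φ :=
    eventually_of_mem (Ioi_mem_nhds hx) fun z hz => (hφ z hz).symm
  refine HasDerivAt.congr_of_eventuallyEq ?_ hφx.symm
  split_ifs with h1
  · subst h1
    simpa [rpow_neg_one] using (hasDerivAt_log hx.ne').const_mul c
  · have hα1 : α - 1 ≠ 0 := sub_ne_zero.2 h1
    refine ((hasDerivAt_rpow_const (p := (α - 1) / α) (Or.inl hx.ne')).const_mul
      (c * α / (α - 1))).congr_deriv ?_
    rw [show (α - 1) / α - 1 = -1 / α by field_simp; ring]
    field_simp

theorem hasDerivAt_mul_rpow_neg_inv (c α : ℝ) {x : ℝ} (hx : 0 < x) :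
    HasDerivAt (fun z => c * z ^ (-1 / α)) (-(c / α) / x ^ (1 + 1 / α)) x := by
  refine ((hasDerivAt_rpow_const (p := -1 / α) (Or.inl hx.ne')).const_mul c).congr_deriv ?_
  rw [show -1 / α - 1 = -(1 + 1 / α) by ring, rpow_neg hx.le]
  ring

theorem strictConcaveOn_phi {α c : ℝ} (hα : 0 < α) (hc : 0 < c) {φ : ℝ → ℝ}
    (hφ : ∀ x : ℝ, 0 < x →
      φ x = if α = 1 then c * log x else c * α / (α - 1) * x ^ ((α - 1) / α)) :
    StrictConcaveOn ℝ (Ioi 0) φ := by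
  have hφ' : ∀ x ∈ Ioi (0:ℝ), HasDerivAt φ (c * x ^ (-1 / α)) x := fun x hx =>
    hasDerivAt_phi hα.ne' hφ hx
  refine StrictAntiOn.strictConcaveOn_of_deriv (convex_Ioi 0)
    (fun x hx => (hφ' x hx).continuousAt.continuousWithinAt) ?_
  rw [interior_Ioi]
  intro x hx y hy hxy
  rw [(hφ' x hx).deriv, (hφ' y hy).deriv]
  exact mul_lt_mul_of_pos_left
    (strictAntiOn_rpow_Ioi_of_exponent_neg (by simpa [neg_div] using hα) hx hy hxy) hc

section IntegralFunctional

variable {P : Type*} [AddCommGroup P] [Module ℝ P] {L : P →ₗ[ℝ] ℝ → ℝ} {V : ℝ → ℝ}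
  {ψ : ℝ → ℝ} {Φ : P → ℝ}

theorem deriv_deriv_integral_comp_line {ψ' ψ'' : ℝ → ℝ}
    (hψ : ∀ z ∈ Ioi 0, HasDerivAt ψ (ψ' z) z) (hψ' : ∀ z ∈ Ioi 0, HasDerivAt ψ' (ψ'' z) z)
    (hψ'' : ContinuousOn ψ'' (Ioi 0)) (hL : ∀ p, Continuous (L p))
    (hLper : ∀ p, Function.Periodic (L p) 1) (hV : Continuous V) (hVper : Function.Periodic V 1)
    (hΦ : ∀ p ∈ {p | ∀ x, 0 < L p x - V x}, Φ p = ∫ y in (0:ℝ)..1, ψ (L p y - V y))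
    {p : P} (hp : ∀ x, 0 < L p x - V x) (v : P) :
    deriv (deriv fun t : ℝ => Φ (p + t • v)) 0 =
      ∫ y in (0:ℝ)..1, ψ'' (L p y - V y) * L v y ^ 2 := by
  have hline : ∀ (t : ℝ) (x : ℝ), L (p + t • v) x - V x = (L p x - V x) + t * L v x :=
    fun t x => by simp only [map_add, map_smul, Pi.add_apply, Pi.smul_apply, smul_eq_mul]; ring
  have hu : Continuous fun y => L p y - V y := (hL p).sub hV
  have hu0 : ∀ y ∈ Icc (0:ℝ) 1, L p y - V y + 0 * L v y ∈ Ioi 0 := fun y _ => by simpa using hp y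
  have hnear : (fun t : ℝ => Φ (p + t • v)) =ᶠ[𝓝 0]
      fun t => ∫ y in (0:ℝ)..1, ψ ((L p y - V y) + t * L v y) := by
    filter_upwards [eventually_forall_add_mul_mem isOpen_Ioi isCompact_Icc hu (hL v) hu0]
      with t ht
    -- positivity is required on all of `ℝ`, but by periodicity it suffices on `[0,1]`
    have hper : Function.Periodic (fun x => L (p + t • v) x - V x) 1 := (hLper _).sub hVper
    have hmem : ∀ x, 0 < L (p + t • v) x - V x := fun x => by
      obtain ⟨y, hy, hxy⟩ := hper.exists_mem_Ico₀ one_pos x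
      simpa only [hxy, hline, mem_Ioi] using ht y (Ico_subset_Icc_self hy)
    simp only [hΦ _ hmem, hline]
  rw [hnear.deriv.deriv_eq, deriv_deriv_integral_comp_add_mul isOpen_Ioi hψ hψ' hψ'' hu (hL v) hu0]
  simp

theorem strictConcaveOn_integral_comp (hψ : StrictConcaveOn ℝ (Ioi 0) ψ)
    (hψc : ContinuousOn ψ (Ioi 0)) (hL : ∀ p, Continuous (L p)) (hV : Continuous V)
    (hLne : ∀ v ≠ 0, ∃ y ∈ Icc (0:ℝ) 1, L v y ≠ 0)
    (hΦ : ∀ p ∈ {p | ∀ x, 0 < L p x - V x}, Φ p = ∫ y in (0:ℝ)..1, ψ (L p y - V y)) :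
    StrictConcaveOn ℝ {p | ∀ x, 0 < L p x - V x} Φ := by
  have hcomb : ∀ p q (a b : ℝ), a + b = 1 → ∀ x,
      L (a • p + b • q) x - V x = a * (L p x - V x) + b * (L q x - V x) := fun p q a b hab x => by
    simp only [map_add, map_smul, Pi.add_apply, Pi.smul_apply, smul_eq_mul]
    linear_combination V x * hab
  have hconv : Convex ℝ {p | ∀ x, 0 < L p x - V x} := fun p hp q hq a b ha hb hab x => by
    rw [hcomb p q a b hab]
    exact convex_Ioi (0:ℝ) (mem_Ioi.2 (hp x)) (mem_Ioi.2 (hq x)) ha hb hab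
  refine ⟨hconv, fun p hp q hq hpq a b ha hb hab => ?_⟩
  obtain ⟨y, hy, hy0⟩ := hLne (p - q) (sub_ne_zero.2 hpq)
  rw [hΦ p hp, hΦ q hq, hΦ _ (hconv hp hq ha.le hb.le hab)]
  simp only [hcomb p q a b hab, smul_eq_mul]
  refine hψ.smul_integral_add_smul_integral_lt hψc (u := fun y => L p y - V y)
    (w := fun y => L q y - V y) ((hL p).sub hV) ((hL q).sub hV)
    (fun y _ => hp y) (fun y _ => hq y) ⟨y, hy, fun h => hy0 ?_⟩ ha hb hab
  simp only [map_sub, Pi.sub_apply]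
  linarith

end IntegralFunctional

theorem stmt_6_general (n : ℕ) (V : ℝ → ℝ) (hV : Continuous V) (hVper : Function.Periodic V 1)
    (α cj : ℝ) (hα0 : 0 < α) (hcj : 0 < cj)
    (φ : ℝ → ℝ)
    (hφ : ∀ x : ℝ, 0 < x →
      φ x = if α = 1 then cj * Real.log x else cj * α / (α - 1) * x ^ ((α - 1) / α))
    (f : ((Fin (n + 1) → ℝ) × (Fin n → ℝ)) → ℝ → ℝ)
    (hf : ∀ ab x, f ab x =
      (∑ k : Fin (n + 1), ab.1 k * Real.cos (2 * π * k.1 * x)) +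
      (∑ k : Fin n, ab.2 k * Real.sin (2 * π * (k.1 + 1) * x)) - V x)
    (C : Set ((Fin (n + 1) → ℝ) × (Fin n → ℝ)))
    (hC : C = {ab | ∀ x : ℝ, 0 < f ab x})
    (Φ : ((Fin (n + 1) → ℝ) × (Fin n → ℝ)) → ℝ)
    (hΦ : ∀ ab ∈ C, Φ ab = ∫ y in (0:ℝ)..1, φ (f ab y)) :
    (∀ ab ∈ C, ∀ v : (Fin (n + 1) → ℝ) × (Fin n → ℝ), v ≠ 0 →
      deriv (deriv fun t : ℝ => Φ (ab + t • v)) 0 =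
        -(cj / α) * ∫ y in (0:ℝ)..1,
          ((∑ k : Fin (n + 1), v.1 k * Real.cos (2 * π * k.1 * y)) +
            (∑ k : Fin n, v.2 k * Real.sin (2 * π * (k.1 + 1) * y))) ^ 2 /
            f ab y ^ (1 + 1 / α) ∧
      deriv (deriv fun t : ℝ => Φ (ab + t • v)) 0 < 0) ∧
    StrictConcaveOn ℝ C Φ := by
  obtain rfl : f = fun ab x => trigPoly n ab x - V x := funext₂ hf
  subst hC
  have hφ' : ∀ z ∈ Ioi (0:ℝ), HasDerivAt φ (cj * z ^ (-1 / α)) z := fun z hz =>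
    hasDerivAt_phi hα0.ne' hφ hz
  refine ⟨fun ab hab v hv => ?_, strictConcaveOn_integral_comp (strictConcaveOn_phi hα0 hcj hφ)
    (fun z hz => (hφ' z hz).continuousAt.continuousWithinAt) continuous_trigPoly hV
    (fun v hv => exists_trigPoly_ne_zero hv) hΦ⟩
  have hφ'' : ContinuousOn (fun z : ℝ => -(cj / α) / z ^ (1 + 1 / α)) (Ioi 0) :=
    continuousOn_const.div (continuousOn_id.rpow_const fun z hz => Or.inl (ne_of_gt hz))
      fun z hz => (rpow_pos_of_pos hz _).ne'
  have hhess : deriv (deriv fun t : ℝ => Φ (ab + t • v)) 0 =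
      -(cj / α) * ∫ y in (0:ℝ)..1, trigPoly n v y ^ 2 / (trigPoly n ab y - V y) ^ (1 + 1 / α) := by
    rw [deriv_deriv_integral_comp_line hφ' (fun z hz => hasDerivAt_mul_rpow_neg_inv cj α hz) hφ''
      continuous_trigPoly periodic_trigPoly hV hVper hΦ hab v,
      ← intervalIntegral.integral_const_mul]
    congr 1 with y
    ring
  refine ⟨hhess, hhess ▸ mul_neg_of_neg_of_pos (neg_neg_of_pos (div_pos hcj hα0)) ?_⟩
  exact integral_sq_div_rpow_pos ((continuous_trigPoly ab).sub hV) (continuous_trigPoly v)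
    (fun y _ => hab y) (exists_trigPoly_ne_zero hv) _

theorem stmt_6 (n : ℕ) (V : ℝ → ℝ) (hV : Continuous V) (hVper : Function.Periodic V 1)
    (α cj : ℝ) (hα0 : 0 < α) (hα2 : α ≤ 2) (hcj : 0 < cj)
    (φ : ℝ → ℝ)
    (hφ : ∀ x : ℝ, 0 < x →
      φ x = if α = 1 then cj * Real.log x else cj * α / (α - 1) * x ^ ((α - 1) / α))
    (f : ((Fin (n + 1) → ℝ) × (Fin n → ℝ)) → ℝ → ℝ)
    (hf : ∀ ab x, f ab x =
      (∑ k : Fin (n + 1), ab.1 k * Real.cos (2 * π * k.1 * x)) +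
      (∑ k : Fin n, ab.2 k * Real.sin (2 * π * (k.1 + 1) * x)) - V x)
    (C : Set ((Fin (n + 1) → ℝ) × (Fin n → ℝ)))
    (hC : C = {ab | ∀ x : ℝ, 0 < f ab x})
    (Φ : ((Fin (n + 1) → ℝ) × (Fin n → ℝ)) → ℝ)
    (hΦ : ∀ ab ∈ C, Φ ab = ∫ y in (0:ℝ)..1, φ (f ab y)) :
    (∀ ab ∈ C, ∀ v : (Fin (n + 1) → ℝ) × (Fin n → ℝ), v ≠ 0 →
      deriv (deriv fun t : ℝ => Φ (ab + t • v)) 0 =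
        -(cj / α) * ∫ y in (0:ℝ)..1,
          ((∑ k : Fin (n + 1), v.1 k * Real.cos (2 * π * k.1 * y)) +
            (∑ k : Fin n, v.2 k * Real.sin (2 * π * (k.1 + 1) * y))) ^ 2 /
            f ab y ^ (1 + 1 / α) ∧
      deriv (deriv fun t : ℝ => Φ (ab + t • v)) 0 < 0) ∧
    StrictConcaveOn ℝ C Φ :=
  stmt_6_general n V hV hVper α cj hα0 hcj φ hφ f hf C hC Φ hΦ
end

section
/- Let Φ : C → R be C¹ on an open convex set C ⊂ R^{2n+1} with coordinates (a_0,...,a_n,b_1,...,b_n), such that −∇Φ is strictly monotone. Let p_k ≥ 0, q_k ∈ R with p_k² + q_k² > 0 for 1 ≤ k ≤ n. Then the system ∂Φ/∂a_0 = 1, ∂Φ/∂a_k = (p_k a_k + q_k b_k)/(p_k²+q_k²), ∂Φ/∂b_k = (p_k b_k − q_k a_k)/(p_k²+q_k²) (1 ≤ k ≤ n) has at most one solution in C. -/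
/-!
Writing `z_k = a_k + i b_k`, the equations for the pair `(a_k, b_k)` say that the corresponding
pair of components of the gradient is `z_k / (p_k + i q_k)`. If `x` and `y` both solve the
system, the `a_0` components of their gradients agree, and each pair contributes
`p_k / (p_k² + q_k²) · |z_k(y) - z_k(x)|² ≥ 0` to `⟪∇Φ(y) - ∇Φ(x), y - x⟫`. This inner product
is thus nonnegative, while strict monotonicity of `-∇Φ` makes it nonpositive and zero only
when `x = y`.
-/

open Finset

theorem sum_fin_two_mul_add_one {M : Type*} [AddCommMonoid M] {n : ℕ} (f : Fin (2 * n + 1) → M) :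
    ∑ i, f i =
      f 0 + ∑ k : Fin n, (f ⟨k + 1, by omega⟩ + f ⟨n + (k + 1), by omega⟩) := by
  rw [Fin.sum_univ_succ, ← Fin.sum_congr' _ (two_mul n).symm, Fin.sum_univ_add,
    ← sum_add_distrib]
  rfl

section PairQuotient

variable (p q a b a' b' : ℝ)

theorem pair_quotient_inner_eq :
    ((p * a + q * b) / (p ^ 2 + q ^ 2) - (p * a' + q * b') / (p ^ 2 + q ^ 2)) * (a - a') +
      ((p * b - q * a) / (p ^ 2 + q ^ 2) - (p * b' - q * a') / (p ^ 2 + q ^ 2)) * (b - b') =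
      p / (p ^ 2 + q ^ 2) * ((a - a') ^ 2 + (b - b') ^ 2) := by
  simp only [div_eq_mul_inv]
  ring

variable {p}

theorem pair_quotient_inner_nonneg (hp : 0 ≤ p) :
    0 ≤ ((p * a + q * b) / (p ^ 2 + q ^ 2) - (p * a' + q * b') / (p ^ 2 + q ^ 2)) * (a - a') +
      ((p * b - q * a) / (p ^ 2 + q ^ 2) - (p * b' - q * a') / (p ^ 2 + q ^ 2)) * (b - b') := by
  rw [pair_quotient_inner_eq]
  positivity

end PairQuotient

theorem stmt_8 (n : ℕ) (p q : ℕ → ℝ)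
    (hp : ∀ k, 1 ≤ k → k ≤ n → 0 ≤ p k)
    (C : Set (EuclideanSpace ℝ (Fin (2 * n + 1))))
    (g : EuclideanSpace ℝ (Fin (2 * n + 1)) → EuclideanSpace ℝ (Fin (2 * n + 1)))
    (hmono : ∀ x ∈ C, ∀ y ∈ C, (inner ℝ (g y - g x) (y - x) : ℝ) ≤ 0 ∧
      ((inner ℝ (g y - g x) (y - x) : ℝ) = 0 ↔ x = y))
    (x y : EuclideanSpace ℝ (Fin (2 * n + 1))) (hx : x ∈ C) (hy : y ∈ C)
    (hxsol : g x ⟨0, by omega⟩ = 1 ∧ ∀ k, (h1 : 1 ≤ k) → (h2 : k ≤ n) →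
      g x ⟨k, by omega⟩ =
        (p k * x ⟨k, by omega⟩ + q k * x ⟨n + k, by omega⟩) / (p k ^ 2 + q k ^ 2) ∧
      g x ⟨n + k, by omega⟩ =
        (p k * x ⟨n + k, by omega⟩ - q k * x ⟨k, by omega⟩) / (p k ^ 2 + q k ^ 2))
    (hysol : g y ⟨0, by omega⟩ = 1 ∧ ∀ k, (h1 : 1 ≤ k) → (h2 : k ≤ n) →
      g y ⟨k, by omega⟩ =
        (p k * y ⟨k, by omega⟩ + q k * y ⟨n + k, by omega⟩) / (p k ^ 2 + q k ^ 2) ∧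
      g y ⟨n + k, by omega⟩ =
        (p k * y ⟨n + k, by omega⟩ - q k * y ⟨k, by omega⟩) / (p k ^ 2 + q k ^ 2)) :
    x = y := by
  obtain ⟨hx0, hxk⟩ := hxsol
  obtain ⟨hy0, hyk⟩ := hysol
  rw [Fin.mk_zero] at hx0 hy0
  obtain ⟨hle, hzero⟩ := hmono x hx y hy
  refine hzero.mp (le_antisymm hle ?_)
  have hinner : inner ℝ (g y - g x) (y - x) = ∑ i, (g y i - g x i) * (y i - x i) := by
    simp [PiLp.inner_apply, mul_comm]
  rw [hinner, sum_fin_two_mul_add_one, hx0, hy0, sub_self, zero_mul, zero_add]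
  refine sum_nonneg fun k _ => ?_
  obtain ⟨hxa, hxb⟩ := hxk (k + 1) (by omega) (by omega)
  obtain ⟨hya, hyb⟩ := hyk (k + 1) (by omega) (by omega)
  rw [hxa, hxb, hya, hyb]
  exact pair_quotient_inner_nonneg _ _ _ _ _ (hp (k + 1) (by omega) (by omega))
end
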